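/- For every ρ ≥ 0, the function f(ε) = (ε^(1/(1+ρ)) + (1-ε)^(1/(1+ρ)))^(1+ρ) is concave on [0,1/2]. -/

import Mathlib

/-!
The function is `ε ↦ N(ε, 1 - ε)` with `N(x, y) = (x ^ (1/p) + y ^ (1/p)) ^ p`, `p = 1 + ρ ≥ 1`,
the `ℓ^(1/p)` quasinorm on the closed positive quadrant. `N` is positively homogeneous of degree
one and superadditive there (Minkowski's inequality in `ℓ^p`, applied to the vectors
`(x₁^(1/p), x₂^(1/p))` and `(y₁^(1/p), y₂^(1/p))`), hence concave; composing with the affine map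
`ε ↦ (ε, 1 - ε)` gives concavity on `[0, 1]`.
-/

open Real Set

noncomputable def quasinorm (p : ℝ) (z : ℝ × ℝ) : ℝ :=
  (z.1 ^ (1 / p) + z.2 ^ (1 / p)) ^ p

section

variable {p : ℝ}

lemma rpow_one_div_rpow {x : ℝ} (hx : 0 ≤ x) (hp : p ≠ 0) : (x ^ (1 / p)) ^ p = x := by
  rw [← rpow_mul hx, one_div_mul_cancel hp, rpow_one]

lemma quasinorm_smul (hp : p ≠ 0) {c : ℝ} (hc : 0 ≤ c) {z : ℝ × ℝ} (hz₁ : 0 ≤ z.1)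
    (hz₂ : 0 ≤ z.2) : quasinorm p (c • z) = c * quasinorm p z := by
  simp only [quasinorm, Prod.smul_fst, Prod.smul_snd, smul_eq_mul]
  rw [mul_rpow hc hz₁, mul_rpow hc hz₂, ← mul_add,
    mul_rpow (rpow_nonneg hc _) (by positivity), rpow_one_div_rpow hc hp]

lemma quasinorm_add_le_quasinorm_add (hp : 1 ≤ p) {z w : ℝ × ℝ}
    (hz₁ : 0 ≤ z.1) (hz₂ : 0 ≤ z.2) (hw₁ : 0 ≤ w.1) (hw₂ : 0 ≤ w.2) :
    quasinorm p z + quasinorm p w ≤ quasinorm p (z + w) := by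
  have hp₀ : p ≠ 0 := by positivity
  have minkowski := Lp_add_le_of_nonneg (s := Finset.univ)
    (f := ![z.1 ^ (1 / p), w.1 ^ (1 / p)]) (g := ![z.2 ^ (1 / p), w.2 ^ (1 / p)]) hp
    (by simp [Fin.forall_fin_two, rpow_nonneg, *]) (by simp [Fin.forall_fin_two, rpow_nonneg, *])
  simp only [Fin.sum_univ_two, Matrix.cons_val_zero, Matrix.cons_val_one,
    rpow_one_div_rpow hz₁ hp₀, rpow_one_div_rpow hz₂ hp₀, rpow_one_div_rpow hw₁ hp₀,
    rpow_one_div_rpow hw₂ hp₀] at minkowski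
  have hsum : 0 ≤ quasinorm p z + quasinorm p w := by unfold quasinorm; positivity
  calc quasinorm p z + quasinorm p w
      = ((quasinorm p z + quasinorm p w) ^ (1 / p)) ^ p := (rpow_one_div_rpow hsum hp₀).symm
    _ ≤ quasinorm p (z + w) := rpow_le_rpow (by positivity) minkowski (by positivity)

lemma concaveOn_quasinorm (hp : 1 ≤ p) : ConcaveOn ℝ (Ici 0 ×ˢ Ici 0) (quasinorm p) := by
  refine ⟨(convex_Ici 0).prod (convex_Ici 0), ?_⟩
  rintro z ⟨hz₁, hz₂⟩ w ⟨hw₁, hw₂⟩ a b ha hb -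
  simp only [mem_Ici] at hz₁ hz₂ hw₁ hw₂
  rw [smul_eq_mul, smul_eq_mul, ← quasinorm_smul (by positivity) ha hz₁ hz₂,
    ← quasinorm_smul (by positivity) hb hw₁ hw₂]
  exact quasinorm_add_le_quasinorm_add hp (by simpa using mul_nonneg ha hz₁)
    (by simpa using mul_nonneg ha hz₂) (by simpa using mul_nonneg hb hw₁)
    (by simpa using mul_nonneg hb hw₂)

lemma concaveOn_rpow_add_one_sub_rpow (hp : 1 ≤ p) :
    ConcaveOn ℝ (Icc 0 1) (fun ε : ℝ => (ε ^ (1 / p) + (1 - ε) ^ (1 / p)) ^ p) := by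
  have hline := (concaveOn_quasinorm hp).comp_affineMap
    (AffineMap.lineMap ((0 : ℝ), (1 : ℝ)) ((1 : ℝ), (0 : ℝ)))
  refine (hline.subset ?_ (convex_Icc 0 1)).congr fun ε _ => ?_
  · rintro ε ⟨hε₀, hε₁⟩
    simp [AffineMap.lineMap_apply, hε₀, hε₁]
  · simp [quasinorm, AffineMap.lineMap_apply, sub_eq_neg_add]

end

/-- For ρ ≥ 0, f(ε) = (ε^(1/(1+ρ)) + (1-ε)^(1/(1+ρ)))^(1+ρ) is concave on [0,1/2]. -/
theorem fbsc_concave (ρ : ℝ) (hρ : 0 ≤ ρ) :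
    ConcaveOn ℝ (Set.Icc (0:ℝ) (1/2))
      (fun ε : ℝ => (ε ^ (1/(1+ρ)) + (1-ε) ^ (1/(1+ρ))) ^ (1+ρ)) :=
  (concaveOn_rpow_add_one_sub_rpow (by linarith)).subset
    (Icc_subset_Icc_right (by norm_num)) (convex_Icc 0 _)
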